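/- Let r > 0 and Q₂ a symmetric n×n matrix with Q₂𝟙 = 0, positive definite on 𝟙⊥. The function J(K) = (1/2)trace(Q₂(K + 𝟙𝟙ᵀ/n)⁻¹ + rK) over symmetric K with K𝟙 = 0 and K positive definite on 𝟙⊥ has gradient ∇J(K) = -(1/2)(K + 𝟙𝟙ᵀ/n)⁻¹Q₂(K + 𝟙𝟙ᵀ/n)⁻¹ + (r/2)(I - 𝟙𝟙ᵀ/n), and ∇J(K) = 0 holds if and only if K = Q₂^{1/2}/√r, where Q₂^{1/2} is the positive semidefinite square root of Q₂. -/

import Mathlib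

open Matrix

open scoped ComplexOrder in
/-- The positive semidefinite square root of a positive semidefinite matrix
(removed from Mathlib; restored here with its old definition). -/
noncomputable def Matrix.PosSemidef.sqrt {n : Type*} [Fintype n] [DecidableEq n] {R : Type*} [RCLike R]
    {A : Matrix n n R} (hA : Matrix.PosSemidef A) : Matrix n n R :=
  hA.1.eigenvectorUnitary.1 * diagonal ((↑) ∘ (√·) ∘ hA.1.eigenvalues) *
    (star hA.1.eigenvectorUnitary : Matrix n n R)

/-!
Write `A = K + 𝟙𝟙ᵀ/n`, which is positive definite. Differentiating the inverse gives
`d/dt tr(Q₂ (A + tH)⁻¹)|₀ = -tr(A⁻¹Q₂A⁻¹H)`, and the projection `I - 𝟙𝟙ᵀ/n` in `∇J` acts as the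
identity against directions with `H𝟙 = 0`. For optimality, `∇J(K) = 0` says
`Q₂ = r·A(I - 𝟙𝟙ᵀ/n)A`, and since `K` annihilates `𝟙𝟙ᵀ/n` this is `Q₂ = r·K²`. So `√r·K` is a
positive semidefinite square root of `Q₂`, and uniqueness of such roots identifies it.
-/

section Sqrt

open scoped MatrixOrder ComplexOrder

namespace Matrix.PosSemidef

variable {ι 𝕜 : Type*} [Fintype ι] [DecidableEq ι] [RCLike 𝕜] {A B : Matrix ι ι 𝕜}

theorem sqrt_eq_cfcSqrt (hA : A.PosSemidef) : hA.sqrt = CFC.sqrt A := by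
  rw [CFC.sqrt_eq_cfc, cfc_nnreal_eq_real _ A hA.nonneg, hA.1.cfc_eq, IsHermitian.cfc,
    Unitary.conjStarAlgAut_apply]
  simp only [Matrix.PosSemidef.sqrt, Real.sqrt]

theorem eq_sqrt_iff (hA : A.PosSemidef) (hB : B.PosSemidef) : B = hA.sqrt ↔ B * B = A := by
  rw [hA.sqrt_eq_cfcSqrt]
  exact ⟨fun h => h ▸ CFC.sqrt_mul_sqrt_self A hA.nonneg,
    fun h => (CFC.sqrt_unique h hB.nonneg).symm⟩

theorem eq_inv_sqrt_smul_sqrt_iff {Q K : Matrix ι ι ℝ} (hQ : Q.PosSemidef) (hK : K.PosSemidef)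
    {r : ℝ} (hr : 0 < r) : K = (√r)⁻¹ • hQ.sqrt ↔ r • (K * K) = Q := by
  rw [eq_inv_smul_iff₀ (Real.sqrt_pos.2 hr).ne', hQ.eq_sqrt_iff (hK.smul (Real.sqrt_nonneg r)),
    smul_mul_smul_comm, Real.mul_self_sqrt hr.le]

end Matrix.PosSemidef

end Sqrt

theorem add_mul_one_sub_mul_add {R : Type*} [Ring R] {k m : R} (hkm : k * m = 0)
    (hmm : m * m = m) : (k + m) * (1 - m) * (k + m) = k * k := by
  have hproj : (k + m) * (1 - m) = k := by
    rw [mul_sub, mul_one, add_mul, hkm, hmm]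
    abel
  rw [hproj, mul_add, hkm, add_zero]

namespace Matrix

section Averaging

variable {ι : Type*} [Fintype ι]

noncomputable def averagingMatrix (ι : Type*) [Fintype ι] : Matrix ι ι ℝ :=
  (Fintype.card ι : ℝ)⁻¹ • of fun _ _ => 1

theorem averagingMatrix_mul_self :
    averagingMatrix ι * averagingMatrix ι = averagingMatrix ι := by
  ext i j
  have : Nonempty ι := ⟨i⟩
  simp [averagingMatrix, mul_apply]

theorem mul_averagingMatrix_eq_zero {κ : Type*} {K : Matrix κ ι ℝ}
    (hK1 : K *ᵥ (fun _ => 1) = 0) : K * averagingMatrix ι = 0 := by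
  ext i j
  have hrow : ∑ k, K i k = 0 := by simpa [mulVec, dotProduct] using congrFun hK1 i
  simp [averagingMatrix, mul_apply, ← Finset.sum_mul, hrow]

theorem dotProduct_averagingMatrix_mulVec (x : ι → ℝ) :
    x ⬝ᵥ averagingMatrix ι *ᵥ x = (x ⬝ᵥ fun _ => 1) ^ 2 / Fintype.card ι := by
  simp only [dotProduct, mulVec, averagingMatrix, smul_apply, of_apply, smul_eq_mul, mul_one,
    ← Finset.mul_sum, ← Finset.sum_mul]
  ring

theorem posSemidef_of_mulVec_one_eq_zero {K : Matrix ι ι ℝ} (hKs : K.IsSymm)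
    (hK1 : K *ᵥ (fun _ => 1) = 0)
    (hK : ∀ x : ι → ℝ, x ⬝ᵥ (fun _ => 1) = 0 → 0 ≤ x ⬝ᵥ K *ᵥ x) : K.PosSemidef := by
  refine .of_dotProduct_mulVec_nonneg (isHermitian_iff_isSymm.2 hKs) fun x => ?_
  rw [star_trivial]
  rcases isEmpty_or_nonempty ι with _ | _
  · simp [dotProduct]
  -- Shifting `x` into `𝟙⊥` does not change the quadratic form.
  set c := (x ⬝ᵥ fun _ => 1) / Fintype.card ι
  have hone : (fun _ => (1 : ℝ)) ᵥ* K = 0 := by rw [← mulVec_transpose, hKs.eq, hK1]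
  have hshift : (x - c • fun _ => 1) ⬝ᵥ K *ᵥ (x - c • fun _ => 1) = x ⬝ᵥ K *ᵥ x := by
    rw [mulVec_sub, mulVec_smul, hK1, smul_zero, sub_zero, sub_dotProduct, smul_dotProduct,
      dotProduct_mulVec (fun _ => 1), hone, zero_dotProduct, smul_zero, sub_zero]
  rw [← hshift]
  refine hK _ ?_
  rw [sub_dotProduct, smul_dotProduct, smul_eq_mul]
  simp [c, dotProduct]

theorem posDef_add_averagingMatrix {K : Matrix ι ι ℝ} (hK : K.PosSemidef)
    (hpos : ∀ x : ι → ℝ, x ⬝ᵥ (fun _ => 1) = 0 → x ≠ 0 → 0 < x ⬝ᵥ K *ᵥ x) :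
    (K + averagingMatrix ι).PosDef := by
  have hM : (averagingMatrix ι).IsHermitian :=
    isHermitian_iff_isSymm.2 (by ext; simp [averagingMatrix])
  refine .of_dotProduct_mulVec_pos (hK.1.add hM) fun x hx => ?_
  rw [star_trivial, add_mulVec, dotProduct_add, dotProduct_averagingMatrix_mulVec]
  by_cases hsum : (x ⬝ᵥ fun _ => 1) = 0
  · rw [hsum]
    simpa using hpos x hsum hx
  · have : Nonempty ι := not_isEmpty_iff.1 fun _ => hx (Subsingleton.elim _ _)
    exact add_pos_of_nonneg_of_pos (hK.dotProduct_mulVec_nonneg x) (by positivity)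

end Averaging

variable {ι : Type*} [Fintype ι] [DecidableEq ι]

theorem nonsing_inv_mul_mul_nonsing_inv_eq_iff {𝕜 : Type*} [Field 𝕜] {A : Matrix ι ι 𝕜}
    (hA : IsUnit A) (Q X : Matrix ι ι 𝕜) : A⁻¹ * Q * A⁻¹ = X ↔ Q = A * X * A := by
  have hdet := (isUnit_iff_isUnit_det A).mp hA
  constructor <;> rintro rfl
  · rw [← mul_assoc, mul_nonsing_inv_cancel_left _ _ hdet, nonsing_inv_mul_cancel_right _ _ hdet]
  · rw [← mul_assoc, nonsing_inv_mul_cancel_left _ _ hdet, mul_nonsing_inv_cancel_right _ _ hdet]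

section Derivative

attribute [local instance] Matrix.linftyOpNormedRing Matrix.linftyOpNormedAlgebra

theorem hasDerivAt_inv_add_smul {𝕜 : Type*} [RCLike 𝕜] {A : Matrix ι ι 𝕜} (hA : IsUnit A)
    (H : Matrix ι ι 𝕜) : HasDerivAt (fun t : 𝕜 => (A + t • H)⁻¹) (-(A⁻¹ * H * A⁻¹)) 0 := by
  have hline : HasDerivAt (fun t : 𝕜 => A + t • H) H 0 := by
    have h := ((hasDerivAt_id (0 : 𝕜)).smul_const H).const_add A
    simp only [id, one_smul] at h
    exact h
  have hinv := (hasFDerivAt_ringInverse (𝕜 := 𝕜) hA.unit).comp_hasDerivAt_of_eq (0 : 𝕜) hline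
    (by simp)
  simp only [Function.comp_def, ← Ring.inverse_unit, IsUnit.unit_spec, _root_.neg_apply,
    ContinuousLinearMap.mulLeftRight_apply] at hinv
  simp only [nonsing_inv_eq_ringInverse]
  exact hinv

theorem hasDerivAt_trace_mul_inv_add_smul {𝕜 : Type*} [RCLike 𝕜] {A : Matrix ι ι 𝕜}
    (hA : IsUnit A) (Q H : Matrix ι ι 𝕜) :
    HasDerivAt (fun t : 𝕜 => (Q * (A + t • H)⁻¹).trace) (-(A⁻¹ * Q * A⁻¹ * H).trace) 0 := by
  let φ : Matrix ι ι 𝕜 →ₗ[𝕜] 𝕜 := (traceLinearMap ι 𝕜 𝕜).comp (LinearMap.mulLeft 𝕜 Q)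
  refine (φ.toContinuousLinearMap.hasFDerivAt.comp_hasDerivAt (0 : 𝕜)
    (hasDerivAt_inv_add_smul hA H)).congr_deriv ?_
  change (Q * -(A⁻¹ * H * A⁻¹)).trace = _
  rw [mul_neg, trace_neg, ← mul_assoc, trace_mul_comm, ← mul_assoc, ← mul_assoc]

end Derivative

variable (Q M : Matrix ι ι ℝ) (r : ℝ)

/-- The paper's `J`, with `M` in place of `𝟙𝟙ᵀ/n`. -/
noncomputable def cost (K : Matrix ι ι ℝ) : ℝ :=
  (1/2) * ((Q * (K + M)⁻¹).trace + r * K.trace)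

noncomputable def costGrad (K : Matrix ι ι ℝ) : Matrix ι ι ℝ :=
  (-(1/2 : ℝ)) • ((K + M)⁻¹ * Q * (K + M)⁻¹) + (r/2) • (1 - M)

theorem hasDerivAt_cost {K H : Matrix ι ι ℝ} (hA : IsUnit (K + M)) (hHM : H * M = 0) :
    HasDerivAt (fun t : ℝ => cost Q M r (K + t • H)) (costGrad Q M r K * H).trace 0 := by
  have hinv := hasDerivAt_trace_mul_inv_add_smul hA Q H
  have htr : HasDerivAt (fun t : ℝ => (K + t • H).trace) H.trace 0 := by
    simp only [trace_add, trace_smul, smul_eq_mul]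
    simpa using ((hasDerivAt_id (0 : ℝ)).mul_const H.trace).const_add K.trace
  have hMH : (M * H).trace = 0 := by rw [trace_mul_comm, hHM, trace_zero]
  refine ((hinv.add (htr.const_mul r)).const_mul (1/2 : ℝ)).congr_deriv ?_
    |>.congr_of_eventuallyEq (.of_forall fun t => ?_)
  · rw [costGrad, add_mul, smul_mul_assoc, smul_mul_assoc, sub_mul, one_mul, trace_add,
      trace_smul, trace_smul, trace_sub, hMH, smul_eq_mul, smul_eq_mul]
    ring
  · simp only [cost, Pi.add_apply, add_right_comm K]

variable {Q M r}

theorem costGrad_eq_zero_iff {K : Matrix ι ι ℝ} (hQ : Q.PosSemidef) (hK : K.PosSemidef)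
    (hr : 0 < r) (hKM : K * M = 0) (hMM : M * M = M) (hA : IsUnit (K + M)) :
    costGrad Q M r K = 0 ↔ K = (√r)⁻¹ • hQ.sqrt :=
  calc costGrad Q M r K = 0 ↔ (K + M)⁻¹ * Q * (K + M)⁻¹ = r • (1 - M) := by
        rw [costGrad, neg_smul, neg_add_eq_zero, show r / 2 = 1 / 2 * r by ring, ← smul_smul,
          smul_right_inj (by norm_num)]
    _ ↔ Q = (K + M) * (r • (1 - M)) * (K + M) := nonsing_inv_mul_mul_nonsing_inv_eq_iff hA _ _
    _ ↔ r • (K * K) = Q := by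
        rw [mul_smul_comm, smul_mul_assoc, add_mul_one_sub_mul_add hKM hMM, eq_comm]
    _ ↔ K = (√r)⁻¹ • hQ.sqrt := (hQ.eq_inv_sqrt_smul_sqrt_iff hK hr).symm

end Matrix

theorem gradient_and_optimality_general {n : ℕ}
    (Q₂ : Matrix (Fin n) (Fin n) ℝ)
    (hQpsd : Q₂.PosSemidef)
    (r : ℝ) (hr : 0 < r) :
    let M : Matrix (Fin n) (Fin n) ℝ := (n:ℝ)⁻¹ • Matrix.of (fun _ _ => (1:ℝ))
    let J : Matrix (Fin n) (Fin n) ℝ → ℝ :=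
      fun K => (1/2) * ((Q₂ * (K + M)⁻¹).trace + r * K.trace)
    let gradJ : Matrix (Fin n) (Fin n) ℝ → Matrix (Fin n) (Fin n) ℝ :=
      fun K => (-(1/2 : ℝ)) • ((K + M)⁻¹ * Q₂ * (K + M)⁻¹) +
        (r/2) • ((1 : Matrix (Fin n) (Fin n) ℝ) - M)
    ∀ K : Matrix (Fin n) (Fin n) ℝ, K.IsSymm → K.mulVec (fun _ => (1:ℝ)) = 0 →
      (∀ x : Fin n → ℝ, dotProduct x (fun _ => (1:ℝ)) = 0 → x ≠ 0 →
        0 < dotProduct x (K.mulVec x)) →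
      (∀ H : Matrix (Fin n) (Fin n) ℝ, H.IsSymm → H.mulVec (fun _ => (1:ℝ)) = 0 →
        HasDerivAt (fun t : ℝ => J (K + t • H)) ((gradJ K * H).trace) 0) ∧
      (gradJ K = 0 ↔ K = (Real.sqrt r)⁻¹ • hQpsd.sqrt) := by
  intro M J gradJ K hKs hK1 hKpos
  have hM : M = averagingMatrix (Fin n) := by simp [M, averagingMatrix]
  have hK : K.PosSemidef := posSemidef_of_mulVec_one_eq_zero hKs hK1 fun x hx =>
    (eq_or_ne x 0).elim (fun h => by simp [h]) fun h => (hKpos x hx h).le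
  have hA : IsUnit (K + M) := (hM ▸ posDef_add_averagingMatrix hK hKpos).isUnit
  refine ⟨fun H _ hH1 => hasDerivAt_cost Q₂ M r hA (hM ▸ mul_averagingMatrix_eq_zero hH1), ?_⟩
  exact costGrad_eq_zero_iff hQpsd hK hr (hM ▸ mul_averagingMatrix_eq_zero hK1)
    (hM ▸ averagingMatrix_mul_self) hA

/-- The gradient of `J(K) = (1/2)trace(Q₂(K + 𝟙𝟙ᵀ/n)⁻¹ + rK)` over symmetric `K`
with `K𝟙 = 0`, positive definite on `𝟙⊥`, is
`∇J(K) = -(1/2)(K + 𝟙𝟙ᵀ/n)⁻¹Q₂(K + 𝟙𝟙ᵀ/n)⁻¹ + (r/2)(I - 𝟙𝟙ᵀ/n)`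
(in the sense that the directional derivative of `J` at `K` along any admissible
direction `H` equals `trace(∇J(K)·H)`), and `∇J(K) = 0` iff `K = Q₂^{1/2}/√r`. -/
theorem gradient_and_optimality {n : ℕ}
    (Q₂ : Matrix (Fin n) (Fin n) ℝ)
    (hQpsd : Q₂.PosSemidef)
    (hQ1 : Q₂.mulVec (fun _ => (1:ℝ)) = 0)
    (hQpos : ∀ x : Fin n → ℝ, dotProduct x (fun _ => (1:ℝ)) = 0 → x ≠ 0 →
      0 < dotProduct x (Q₂.mulVec x))
    (r : ℝ) (hr : 0 < r) :
    let M : Matrix (Fin n) (Fin n) ℝ := (n:ℝ)⁻¹ • Matrix.of (fun _ _ => (1:ℝ))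
    let J : Matrix (Fin n) (Fin n) ℝ → ℝ :=
      fun K => (1/2) * ((Q₂ * (K + M)⁻¹).trace + r * K.trace)
    let gradJ : Matrix (Fin n) (Fin n) ℝ → Matrix (Fin n) (Fin n) ℝ :=
      fun K => (-(1/2 : ℝ)) • ((K + M)⁻¹ * Q₂ * (K + M)⁻¹) +
        (r/2) • ((1 : Matrix (Fin n) (Fin n) ℝ) - M)
    ∀ K : Matrix (Fin n) (Fin n) ℝ, K.IsSymm → K.mulVec (fun _ => (1:ℝ)) = 0 →
      (∀ x : Fin n → ℝ, dotProduct x (fun _ => (1:ℝ)) = 0 → x ≠ 0 →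
        0 < dotProduct x (K.mulVec x)) →
      (∀ H : Matrix (Fin n) (Fin n) ℝ, H.IsSymm → H.mulVec (fun _ => (1:ℝ)) = 0 →
        HasDerivAt (fun t : ℝ => J (K + t • H)) ((gradJ K * H).trace) 0) ∧
      (gradJ K = 0 ↔ K = (Real.sqrt r)⁻¹ • hQpsd.sqrt) :=
  gradient_and_optimality_general Q₂ hQpsd r hr
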